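/- Let H be a compact Hausdorff space and X ⊆ H a dense open subset. Equip X with the topology and uniformity inherited from H, let ℬ be the collection of subsets of X whose closure in H is compact and contained in X (equivalently, precompact in X), and let 𝒞 be the collection of complex-valued functions on X that are restrictions of continuous functions H → ℂ (equivalently, bounded uniformly continuous functions on X). Then a family 𝒰 of subsets of X is uniformly (𝒞,ℬ)-bounded if and only if 𝒰 is continuously controlled by H. -/

import Mathlib

/-- The star `st(A,𝒰)` of a set `A` with respect to a family `𝒰`. -/
def st {X : Type*} (A : Set X) (𝒰 : Set (Set X)) : Set X :=
  A ∪ ⋃ U ∈ {U ∈ 𝒰 | (U ∩ A).Nonempty}, U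

/-- A family `𝒰` is uniformly `(𝒞,ℬ)`-bounded, where the predicate `WB`
singles out the weakly bounded sets of the bounded structure `ℬ`:
(1) stars of weakly bounded sets are weakly bounded; (2) for every weakly
bounded `B`, every `f ∈ 𝒞` and `ε > 0` there is a weakly bounded `B' ⊇ B`
with `diam f(U ∖ B') ≤ ε` for all `U ∈ 𝒰`. -/
def UnifCB {X : Type*} (WB : Set X → Prop) (𝒞 : Set (X → ℂ))
    (𝒰 : Set (Set X)) : Prop :=
  (∀ B : Set X, WB B → WB (st B 𝒰)) ∧
  ∀ B : Set X, WB B → ∀ f ∈ 𝒞, ∀ ε : ℝ, 0 < ε →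
    ∃ B' : Set X, WB B' ∧ B ⊆ B' ∧
      ∀ U ∈ 𝒰, ∀ x ∈ U \ B', ∀ y ∈ U \ B', dist (f x) (f y) ≤ ε

/-- A family `𝒰` of subsets of the dense open subset `X` of `H` is continuously
controlled by `H`: (1) stars of compact sets have compact closure (in `X`,
equivalently compact closure in `H` contained in `X`); (2) for every point
`x ∈ H ∖ X` and neighborhood `V` of `x` there is a smaller neighborhood `W`
such that every `U ∈ 𝒰` meeting `W` is contained in `V`. -/
def ContControlled {H : Type*} [TopologicalSpace H] (X : Set H)
    (𝒰 : Set (Set ↥X)) : Prop :=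
  (∀ C : Set ↥X, IsCompact C → IsCompact (closure (st C 𝒰))) ∧
  ∀ x : H, x ∉ X → ∀ V : Set H, IsOpen V → x ∈ V →
    ∃ W : Set H, IsOpen W ∧ x ∈ W ∧ W ⊆ V ∧
      ∀ U ∈ 𝒰, ((Subtype.val '' U) ∩ W).Nonempty → Subtype.val '' U ⊆ V

/-!
Both conditions say that, far out towards `H ∖ X`, the members of `𝒰` become small. Uniform
`(𝒞,ℬ)`-boundedness yields this in the form: for each continuous `g` on `H` and `ε > 0`, off some compact `K ⊆ X`
every member of `𝒰` has `g`-oscillation at most `ε`. Continuous control gives it by covering the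
compact set `H ∖ X` by finitely many neighbourhoods `W` whose `𝒰`-members lie in a set where `g`
varies by less than `ε`, and taking `K = H ∖ ⋃ W`. Conversely, given `x ∉ X` and `V ∋ x`, an
Urysohn function `g` with `g x = 1` and `g = 0` off `V` has oscillation `≤ 1/2` on members of `𝒰`
leaving the compact closure `K` of a star; then `W = {g > 1/2} ∖ K` works.
-/

open Set

section Star

variable {X : Type*} {A B U : Set X} {𝒰 : Set (Set X)}

lemma subset_st : A ⊆ st A 𝒰 := subset_union_left

lemma st_mono (h : A ⊆ B) : st A 𝒰 ⊆ st B 𝒰 :=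
  union_subset_union h <| biUnion_subset_biUnion_left fun _ hU =>
    ⟨hU.1, hU.2.mono (inter_subset_inter_right _ h)⟩

lemma subset_st_of_mem (hU : U ∈ 𝒰) (hA : (U ∩ A).Nonempty) : U ⊆ st A 𝒰 :=
  subset_union_of_subset_right
    (subset_biUnion_of_mem (s := {U ∈ 𝒰 | (U ∩ A).Nonempty}) (u := id) ⟨hU, hA⟩) A

lemma disjoint_of_mem_of_notMem_st (hU : U ∈ 𝒰) {u : X} (hu : u ∈ U) (hust : u ∉ st A 𝒰) :
    Disjoint U A :=
  disjoint_left.2 fun _ hyU hyA => hust (subset_st_of_mem hU ⟨_, hyU, hyA⟩ hu)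

end Star

section UnifCB

variable {X : Type*} [TopologicalSpace X] {𝒞 : Set (X → ℂ)} {𝒰 : Set (Set X)}

lemma UnifCB.exists_isCompact_dist_le (h : UnifCB (fun B : Set X => IsCompact (closure B)) 𝒞 𝒰)
    {f : X → ℂ} (hf : f ∈ 𝒞) {ε : ℝ} (hε : 0 < ε) :
    ∃ K : Set X, IsCompact K ∧ ∀ U ∈ 𝒰, ∀ a ∈ U, a ∉ K → ∀ b ∈ U, dist (f a) (f b) ≤ ε := by
  obtain ⟨B, hB, -, hBU⟩ := h.2 ∅ (by simp) f hf ε hε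
  refine ⟨closure (st B 𝒰), h.1 B hB, fun U hU a ha haK b hb => ?_⟩
  have hUB : Disjoint U B := disjoint_of_mem_of_notMem_st hU ha fun h => haK (subset_closure h)
  exact hBU U hU a ⟨ha, hUB.notMem_of_mem_left ha⟩ b ⟨hb, hUB.notMem_of_mem_left hb⟩

end UnifCB

section ContControlled

variable {H : Type*} [TopologicalSpace H] {X : Set H} {𝒰 : Set (Set ↥X)}

lemma ContControlled.isCompact_closure_st (h : ContControlled X 𝒰) {B : Set ↥X}
    (hB : IsCompact (closure B)) : IsCompact (closure (st B 𝒰)) :=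
  (h.1 _ hB).of_isClosed_subset isClosed_closure (closure_mono (st_mono subset_closure))

lemma ContControlled.exists_isCompact_dist_lt [CompactSpace H] (h : ContControlled X 𝒰)
    (hX : IsOpen X) {E : Type*} [PseudoMetricSpace E] {g : H → E} (hg : Continuous g) {ε : ℝ}
    (hε : 0 < ε) :
    ∃ K : Set ↥X, IsCompact K ∧ ∀ U ∈ 𝒰, ∀ a ∈ U, a ∉ K → ∀ b ∈ U, dist (g a) (g b) < ε := by
  have hW : ∀ x : ↥Xᶜ, ∃ W : Set H, IsOpen W ∧ ↑x ∈ W ∧ W ⊆ g ⁻¹' Metric.ball (g x) (ε / 2) ∧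
      ∀ U ∈ 𝒰, ((Subtype.val '' U) ∩ W).Nonempty →
        Subtype.val '' U ⊆ g ⁻¹' Metric.ball (g x) (ε / 2) := fun x =>
    h.2 x x.2 _ (Metric.isOpen_ball.preimage hg) (Metric.mem_ball_self (half_pos hε))
  choose W hWo hxW _ hWU using hW
  obtain ⟨t, ht⟩ := hX.isClosed_compl.isCompact.elim_finite_subcover W hWo
    fun y hy => mem_iUnion.2 ⟨⟨y, hy⟩, hxW _⟩
  set K : Set H := (⋃ i ∈ t, W i)ᶜ
  have hKX : K ⊆ X := compl_subset_comm.1 ht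
  refine ⟨Subtype.val ⁻¹' K, ?_, fun U hU a ha haK b hb => ?_⟩
  · rw [Subtype.isCompact_iff, Subtype.image_preimage_coe, inter_eq_right.2 hKX]
    exact (isOpen_biUnion fun i _ => hWo i).isClosed_compl.isCompact
  · obtain ⟨i, -, hai⟩ := mem_iUnion₂.1 (not_not.1 haK)
    have hUi := hWU i U hU ⟨a, mem_image_of_mem _ ha, hai⟩
    calc dist (g a) (g b) ≤ dist (g a) (g i) + dist (g b) (g i) := dist_triangle_right _ _ _
      _ < ε / 2 + ε / 2 := add_lt_add (hUi (mem_image_of_mem _ ha)) (hUi (mem_image_of_mem _ hb))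
      _ = ε := add_halves ε

theorem ContControlled.unifCB [CompactSpace H] [T2Space H] (hX : IsOpen X)
    (h : ContControlled X 𝒰) :
    UnifCB (fun B : Set ↥X => IsCompact (closure B))
      {f : ↥X → ℂ | ∃ g : H → ℂ, Continuous g ∧ ∀ x : ↥X, f x = g ↑x} 𝒰 := by
  refine ⟨fun B hB => h.isCompact_closure_st hB, ?_⟩
  rintro B hB f ⟨g, hg, hfg⟩ ε hε
  obtain rfl : f = fun x : ↥X => g x := funext hfg
  obtain ⟨K, hK, hKU⟩ := h.exists_isCompact_dist_lt hX hg hε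
  refine ⟨B ∪ K, ?_, subset_union_left, fun U hU a ha b hb =>
    (hKU U hU a ha.1 (fun haK => ha.2 (Or.inr haK)) b hb.1).le⟩
  show IsCompact (closure (B ∪ K))
  rw [closure_union, hK.isClosed.closure_eq]
  exact hB.union hK

end ContControlled

theorem UnifCB.contControlled {H : Type*} [TopologicalSpace H] [CompactSpace H] [T2Space H]
    {X : Set H} {𝒰 : Set (Set ↥X)}
    (h : UnifCB (fun B : Set ↥X => IsCompact (closure B))
      {f : ↥X → ℂ | ∃ g : H → ℂ, Continuous g ∧ ∀ x : ↥X, f x = g ↑x} 𝒰) :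
    ContControlled X 𝒰 := by
  refine ⟨fun C hC => h.1 C (show IsCompact (closure C) by rwa [hC.isClosed.closure_eq]), fun x hx V hV hxV => ?_⟩
  obtain ⟨g, hgV, hgx, -⟩ := exists_continuous_zero_one_of_isClosed hV.isClosed_compl
    isClosed_singleton (disjoint_singleton_right.2 (not_not_intro hxV))
  have hpos : g ⁻¹' Ioi 0 ⊆ V := fun y hy => by_contra fun hyV => by
    simp [mem_preimage, hgV hyV] at hy
  obtain ⟨K, hK, hKU⟩ := h.exists_isCompact_dist_le (f := fun p => (g p : ℂ))
    ⟨_, Complex.continuous_ofReal.comp g.continuous, fun _ => rfl⟩ one_half_pos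
  refine ⟨g ⁻¹' Ioi (1 / 2) \ Subtype.val '' K,
    (isOpen_Ioi.preimage g.continuous).sdiff (hK.image continuous_subtype_val).isClosed,
    ⟨by norm_num [hgx rfl], fun ⟨p, _, hp⟩ => hx (hp ▸ p.2)⟩,
    fun y hy => hpos (lt_trans one_half_pos (mem_preimage.1 hy.1)), ?_⟩
  rintro U hU ⟨_, ⟨a, haU, rfl⟩, hga, haK⟩ _ ⟨b, hbU, rfl⟩
  have hab : dist (g a) (g b) ≤ 1 / 2 := by
    simpa [Complex.isometry_ofReal.dist_eq] using
      hKU U hU a haU (fun h => haK (mem_image_of_mem _ h)) b hbU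
  have hga : (1 / 2 : ℝ) < g a := hga
  exact hpos (show (0 : ℝ) < g b by linarith [(abs_le.1 (Real.dist_eq _ _ ▸ hab)).2])

theorem stmt_9_general {H : Type*} [TopologicalSpace H] [CompactSpace H] [T2Space H]
    (X : Set H) (hXopen : IsOpen X) (𝒰 : Set (Set ↥X)) :
    UnifCB (fun B : Set ↥X => IsCompact (closure B))
        {f : ↥X → ℂ | ∃ g : H → ℂ, Continuous g ∧ ∀ x : ↥X, f x = g ↑x} 𝒰 ↔
      ContControlled X 𝒰 :=
  ⟨UnifCB.contControlled, ContControlled.unifCB hXopen⟩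

/-- for a dense open subset `X` of a compact Hausdorff space `H`,
with `ℬ` the precompact subsets of `X` (= weakly bounded sets) and `𝒞` the
restrictions to `X` of continuous functions `H → ℂ`, a family is uniformly
`(𝒞,ℬ)`-bounded iff it is continuously controlled by `H`. -/
theorem stmt_9 {H : Type*} [TopologicalSpace H] [CompactSpace H] [T2Space H]
    (X : Set H) (hXopen : IsOpen X) (hXdense : Dense X) (𝒰 : Set (Set ↥X)) :
    UnifCB (fun B : Set ↥X => IsCompact (closure B))
        {f : ↥X → ℂ | ∃ g : H → ℂ, Continuous g ∧ ∀ x : ↥X, f x = g ↑x} 𝒰 ↔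
      ContControlled X 𝒰 :=
  stmt_9_general X hXopen 𝒰
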